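/- arXiv:2009.03345 — 2 statements merged into one kernel-verified Lean document; each statement's English description precedes it below -/
import Mathlib

section
/- For every integer n ≥ 2, Ψ_n(x) = ∏_{1≤s≤n, gcd(s,n)=1} (x − 2i·cos(πs/n)), i.e., the roots of the n-th fibotomic polynomial are exactly 2i·cos(πs/n) for 1 ≤ s ≤ n with gcd(s,n)=1. -/
open Polynomial

/-- The Fibonacci polynomials: `F 1 = 1`, `F 2 = X`, `F (n+2) = X * F (n+1) + F n`. -/
noncomputable def fibPoly : ℕ → Polynomial ℤ
  | 0 => 0
  | 1 => 1
  | n + 2 => X * fibPoly (n + 1) + fibPoly n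

/-! With `c = i e^{iθ}` and `d = i e^{-iθ}` one has `c d = -1` and `(c - d) F_n(c + d) = c^n - d^n`,
so `F_n` vanishes at `2i cos(πs/n)` for `0 < s < n`; these are `n - 1` distinct numbers, hence all
the roots of `F_n`. Grouping the fractions `s/n` by their reduced form `t/d` splits this
factorization into a product over `d ∣ n` of `∏_{gcd(t,d)=1} (X - 2i cos(πt/d))`, and
`F_n = ∏_{d ∣ n} Ψ_d` determines every `Ψ_d` by strong induction, so `Ψ_d` is that product. -/

open Finset

theorem Polynomial.Monic.eq_prod_X_sub_C_of_isRoot {R ι : Type*} [Field R]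
    {p : R[X]} {s : Finset ι} {r : ι → R} (hp : p.Monic) (hdeg : p.natDegree = #s)
    (hr : Set.InjOn r s) (hroot : ∀ i ∈ s, p.IsRoot (r i)) :
    p = ∏ i ∈ s, (X - C (r i)) := by
  refine eq_of_monic_of_dvd_of_natDegree_le (monic_prod_of_monic _ _ fun i _ => monic_X_sub_C _)
    hp ?_ ?_
  · refine prod_dvd_of_coprime (fun i hi j hj hij => ?_) fun i hi =>
      dvd_iff_isRoot.mpr (hroot i hi)
    exact isCoprime_X_sub_C_of_isUnit_sub (sub_ne_zero.mpr (hr.ne hi hj hij)).isUnit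
  · rw [hdeg, natDegree_prod_of_monic _ _ fun i _ => monic_X_sub_C _]
    simp

theorem eq_of_prod_divisors_eq {M : Type*} [CommMonoidWithZero M] [Nontrivial M]
    [IsCancelMulZero M] {f g : ℕ → M} (hg : ∀ n, g n ≠ 0)
    (h : ∀ n, 0 < n → ∏ d ∈ n.divisors, f d = ∏ d ∈ n.divisors, g d) :
    ∀ n, 0 < n → f n = g n := by
  intro n
  induction n using Nat.strong_induction_on with
  | _ n ih =>
    intro hn
    have hproper : ∏ d ∈ n.properDivisors, f d = ∏ d ∈ n.properDivisors, g d :=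
      prod_congr rfl fun d hd =>
        ih d (Nat.mem_properDivisors.mp hd).2 (Nat.pos_of_mem_properDivisors hd)
    have hne : ∏ d ∈ n.properDivisors, g d ≠ 0 := prod_ne_zero_iff.mpr fun d _ => hg d
    have := h n hn
    rw [← Nat.cons_self_properDivisors hn.ne', prod_cons, prod_cons, hproper] at this
    exact mul_right_cancel₀ hne this

theorem prod_Ico_eq_prod_divisors_prod_coprime {M : Type*} [CommMonoid M] (f : ℕ → ℕ → M)
    (hf : ∀ d t k, 0 < k → f (d * k) (t * k) = f d t) (n : ℕ) :
    ∏ s ∈ Ico 1 n, f n s = ∏ d ∈ n.divisors, ∏ t ∈ Ico 1 d with t.gcd d = 1, f d t := by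
  rcases n.eq_zero_or_pos with rfl | hn
  · simp
  rw [← prod_fiberwise_of_maps_to (g := fun s => s.gcd n) (t := n.divisors)
    fun s _ => Nat.mem_divisors.mpr ⟨Nat.gcd_dvd_right _ _, hn.ne'⟩,
    ← Nat.prod_div_divisors n fun d => ∏ t ∈ Ico 1 d with t.gcd d = 1, f d t]
  refine prod_congr rfl fun e he => ?_
  obtain ⟨d, hde⟩ := Nat.dvd_of_mem_divisors he
  have he0 : 0 < e := Nat.pos_of_mem_divisors he
  rw [hde, Nat.mul_div_cancel_left _ he0, mul_comm e d]
  refine (prod_nbij' (· * e) (· / e) ?_ ?_ ?_ ?_ fun t _ => (hf d t e he0).symm).symm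
  · intro t ht
    simp only [mem_filter, mem_Ico] at ht ⊢
    refine ⟨⟨?_, ?_⟩, by rw [Nat.gcd_mul_right, ht.2, one_mul]⟩ <;> nlinarith
  · intro s hs
    simp only [mem_filter, mem_Ico] at hs ⊢
    obtain ⟨⟨hs1, hsn⟩, hgcd⟩ := hs
    have hes : e ∣ s := hgcd ▸ Nat.gcd_dvd_left s (d * e)
    refine ⟨⟨Nat.div_pos (Nat.le_of_dvd hs1 hes) he0, (Nat.div_lt_iff_lt_mul he0).mpr hsn⟩,
      ?_⟩
    have := Nat.coprime_div_gcd_div_gcd (m := s) (n := d * e) (Nat.gcd_pos_of_pos_left _ hs1)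
    rwa [hgcd, Nat.mul_div_cancel _ he0] at this
  · intro t _
    exact Nat.mul_div_cancel t he0
  · intro s hs
    simp only [mem_filter] at hs
    exact Nat.div_mul_cancel (hs.2 ▸ Nat.gcd_dvd_left s (d * e))

theorem fibPoly_succ_monic_and_natDegree :
    ∀ n : ℕ, (fibPoly (n + 1)).Monic ∧ (fibPoly (n + 1)).natDegree = n
  | 0 => by simp [fibPoly]
  | 1 => by simp [fibPoly]
  | n + 2 => by
    obtain ⟨hmon, hdeg⟩ := fibPoly_succ_monic_and_natDegree (n + 1)
    obtain ⟨-, hdeg'⟩ := fibPoly_succ_monic_and_natDegree n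
    have hXdeg : (X * fibPoly (n + 2)).natDegree = n + 2 := by
      rw [monic_X.natDegree_mul hmon, natDegree_X, hdeg, add_comm]
    have hlt : (fibPoly (n + 1)).degree < (X * fibPoly (n + 2)).degree :=
      degree_lt_degree (by omega)
    rw [fibPoly]
    exact ⟨(monic_X.mul hmon).add_of_left hlt,
      (natDegree_add_eq_left_of_degree_lt hlt).trans hXdeg⟩

theorem eval_map_fibPoly_mul_sub {R : Type*} [CommRing R] {c d : R} (hcd : c * d = -1) :
    ∀ n : ℕ, (c - d) * ((fibPoly n).map (Int.castRingHom R)).eval (c + d) = c ^ n - d ^ n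
  | 0 => by simp [fibPoly]
  | 1 => by simp [fibPoly]
  | n + 2 => by
    have h₀ := eval_map_fibPoly_mul_sub hcd n
    have h₁ := eval_map_fibPoly_mul_sub hcd (n + 1)
    simp only [fibPoly, Polynomial.map_add, Polynomial.map_mul, map_X, eval_add, eval_mul, eval_X]
    linear_combination (c + d) * h₁ + h₀ + (c ^ n - d ^ n) * hcd

noncomputable def fibRoot (n s : ℕ) : ℂ := 2 * Complex.I * Complex.cos (Real.pi * s / n)

open Complex in
theorem isRoot_map_fibPoly_fibRoot {n s : ℕ} (hs : 0 < s) (hsn : s < n) :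
    ((fibPoly n).map (Int.castRingHom ℂ)).IsRoot (fibRoot n s) := by
  have hn : 0 < n := hs.trans hsn
  set x : ℂ := Real.pi * s / n with hx
  set c := I * (cos x + sin x * I)
  set d := I * (cos (-x) + sin (-x) * I)
  have hcd : c * d = -1 := by
    simp only [c, d, cos_neg, sin_neg]
    linear_combination (cos x ^ 2 - sin x ^ 2 * (I ^ 2 - 1)) * I_sq - cos_sq_add_sin_sq x
  have hsum : c + d = fibRoot n s := by
    simp only [c, d, cos_neg, sin_neg, fibRoot]
    ring
  have hsin : sin x ≠ 0 := by
    have hx_real : x = ((Real.pi * s / n : ℝ) : ℂ) := by push_cast; rfl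
    rw [hx_real, ← ofReal_sin, ofReal_ne_zero]
    have hn' : (0 : ℝ) < n := by exact_mod_cast hn
    refine (Real.sin_pos_of_pos_of_lt_pi (by positivity) ?_).ne'
    rw [div_lt_iff₀ hn']
    gcongr
  have hsub : c - d ≠ 0 := by
    have : c - d = -2 * sin x := by
      simp only [c, d, cos_neg, sin_neg]
      linear_combination (2 * sin x) * I_sq
    rw [this]
    exact mul_ne_zero (by norm_num) hsin
  have hpow : c ^ n = d ^ n := by
    have hnx : (n : ℂ) * x = s * Real.pi := by
      have : (n : ℂ) ≠ 0 := by exact_mod_cast hn.ne'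
      rw [hx]
      field_simp
    simp only [c, d]
    rw [mul_pow, mul_pow, cos_add_sin_mul_I_pow, cos_add_sin_mul_I_pow, mul_neg, hnx, cos_neg,
      sin_neg, sin_nat_mul_pi]
    ring
  have := eval_map_fibPoly_mul_sub hcd n
  rw [hsum, hpow, sub_self] at this
  exact (mul_eq_zero.mp this).resolve_left hsub

theorem fibRoot_injOn (n : ℕ) : Set.InjOn (fibRoot n) (Set.Iic n) := by
  rcases n.eq_zero_or_pos with rfl | hn
  · intro a ha b hb _
    simp_all
  intro a ha b hb hab
  have hreal : ∀ s, fibRoot n s = 2 * Complex.I * (Real.cos (Real.pi * s / n) : ℂ) := by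
    intro s
    simp [fibRoot]
  have hmem : ∀ s ∈ Set.Iic n, Real.pi * s / n ∈ Set.Icc 0 Real.pi := by
    intro s hs
    refine ⟨by positivity, div_le_of_le_mul₀ (by positivity) Real.pi_pos.le ?_⟩
    gcongr
    exact_mod_cast hs
  rw [hreal, hreal, mul_right_inj' (by simp), Complex.ofReal_inj] at hab
  have := Real.injOn_cos (hmem a ha) (hmem b hb) hab
  rw [div_left_inj' (by positivity), mul_right_inj' Real.pi_ne_zero] at this
  exact_mod_cast this

theorem fibRoot_mul_mul (d t : ℕ) {k : ℕ} (hk : 0 < k) :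
    fibRoot (d * k) (t * k) = fibRoot d t := by
  have hk' : (k : ℂ) ≠ 0 := by exact_mod_cast hk.ne'
  rw [fibRoot, fibRoot, Nat.cast_mul, Nat.cast_mul, ← mul_assoc, mul_div_mul_right _ _ hk']

theorem map_fibPoly_eq_prod {n : ℕ} (hn : 0 < n) :
    (fibPoly n).map (Int.castRingHom ℂ) = ∏ s ∈ Ico 1 n, (X - C (fibRoot n s)) := by
  obtain ⟨m, rfl⟩ := Nat.exists_eq_succ_of_ne_zero hn.ne'
  obtain ⟨hmon, hdeg⟩ := fibPoly_succ_monic_and_natDegree m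
  refine (hmon.map _).eq_prod_X_sub_C_of_isRoot ?_ ((fibRoot_injOn _).mono ?_)
    fun s hs => isRoot_map_fibPoly_fibRoot (mem_Ico.mp hs).1 (mem_Ico.mp hs).2
  · rw [hmon.natDegree_map, hdeg, Nat.card_Ico]
    omega
  · intro s hs
    exact (mem_Ico.mp hs).2.le

noncomputable def fibotomicComplex (d : ℕ) : ℂ[X] :=
  ∏ t ∈ Ico 1 d with t.gcd d = 1, (X - C (fibRoot d t))

theorem fibotomic_roots_general
    (Ψ : ℕ → Polynomial ℤ)
    (hΨprod : ∀ n, 1 ≤ n → fibPoly n = ∏ d ∈ n.divisors, Ψ d)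
    (n : ℕ) (hn : 2 ≤ n) :
    (Ψ n).map (Int.castRingHom ℂ) =
      ∏ s ∈ (Finset.Icc 1 n).filter (fun s => Nat.gcd s n = 1),
        (X - C (2 * Complex.I * Complex.cos (Real.pi * s / n))) := by
  have hΨ : ∀ m, 0 < m → (Ψ m).map (Int.castRingHom ℂ) = fibotomicComplex m := by
    refine eq_of_prod_divisors_eq
      (fun m => (monic_prod_of_monic _ _ fun t _ => monic_X_sub_C _).ne_zero) fun m hm => ?_
    rw [← Polynomial.map_prod, ← hΨprod m hm, map_fibPoly_eq_prod hm]
    exact prod_Ico_eq_prod_divisors_prod_coprime (fun d t => X - C (fibRoot d t))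
      (fun d t k hk => by rw [fibRoot_mul_mul d t hk]) m
  have hIco : {s ∈ Ico 1 n | s.gcd n = 1} = {s ∈ Icc 1 n | s.gcd n = 1} := by
    have hne : ∀ s, s.gcd n = 1 → s ≠ n := by
      rintro s hs rfl
      rw [Nat.gcd_self] at hs
      omega
    ext s
    simp only [mem_filter, mem_Ico, mem_Icc]
    grind
  rw [hΨ n (by omega), fibotomicComplex, hIco]
  rfl

theorem fibotomic_roots
    (Ψ : ℕ → Polynomial ℤ) (hΨ1 : Ψ 1 = 1)
    (hΨmonic : ∀ n, 1 ≤ n → (Ψ n).Monic)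
    (hΨprod : ∀ n, 1 ≤ n → fibPoly n = ∏ d ∈ n.divisors, Ψ d)
    (n : ℕ) (hn : 2 ≤ n) :
    (Ψ n).map (Int.castRingHom ℂ) =
      ∏ s ∈ (Finset.Icc 1 n).filter (fun s => Nat.gcd s n = 1),
        (X - C (2 * Complex.I * Complex.cos (Real.pi * s / n))) :=
  fibotomic_roots_general Ψ hΨprod n hn
end

section
/- Let p be an odd prime and x > 0 a real number, and let ω = (x+√(x²+4))/2. Then ω^p − ω^{−p} = x·Ψ_{2p}(x). -/
/-!
With `β = -ω⁻¹` we have `ω + β = x` and `ωβ = -1`, so Binet's formula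
`F_n(x) (ω - β) = ωⁿ - βⁿ` holds, and for odd `p` we get `ωᵖ - ω⁻ᵖ = ωᵖ + βᵖ = L_p(x)`, where
`L_p = F_{p+1} + F_{p-1}` is the Lucas polynomial. The addition formula for Fibonacci polynomials gives
`F_{2p} = F_p L_p`, while the divisors `1, 2, p, 2p` of `2p` give `F_{2p} = X Ψ_p Ψ_{2p}` with
`F_p = Ψ_p ≠ 0`; cancelling in `ℤ[X]` yields `L_p = X Ψ_{2p}`.
-/

open Polynomial

theorem Nat.Coprime.prod_divisors_mul {M : Type*} [CommMonoid M] {m n : ℕ} (hmn : m.Coprime n)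
    (f : ℕ → M) :
    ∏ d ∈ (m * n).divisors, f d = ∏ a ∈ m.divisors, ∏ b ∈ n.divisors, f (a * b) := by
  rw [hmn.divisors_mul, Finset.prod_map, ← Finset.prod_product' (f := fun a b => f (a * b))]
  exact Finset.prod_attach _ fun d : ℕ × ℕ => f (d.1 * d.2)

section Fibonacci

@[simp] theorem fibPoly_zero : fibPoly 0 = 0 := rfl

@[simp] theorem fibPoly_one : fibPoly 1 = 1 := rfl

theorem fibPoly_add_two (n : ℕ) : fibPoly (n + 2) = X * fibPoly (n + 1) + fibPoly n := rfl

theorem fibPoly_add (m n : ℕ) :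
    fibPoly (m + n + 1) = fibPoly (m + 1) * fibPoly (n + 1) + fibPoly m * fibPoly n := by
  induction n generalizing m with
  | zero => simp
  | succ n ih =>
    rw [show m + (n + 1) + 1 = m + 1 + n + 1 by ring, ih, fibPoly_add_two, fibPoly_add_two]
    ring

theorem fibPoly_two_mul (n : ℕ) :
    fibPoly (2 * n) = fibPoly n * (fibPoly (n + 1) + fibPoly (n - 1)) := by
  rcases n with _ | n
  · simp
  · rw [show 2 * (n + 1) = n + 1 + n + 1 by ring, fibPoly_add, Nat.add_sub_cancel]
    ring

theorem eval_one_fibPoly (n : ℕ) : (fibPoly n).eval 1 = Nat.fib n := by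
  induction n using Nat.twoStepInduction with
  | zero => simp
  | one => simp
  | more n ih₀ ih₁ => simp [fibPoly_add_two, Nat.fib_add_two, ih₀, ih₁, add_comm]

theorem fibPoly_ne_zero {n : ℕ} (hn : n ≠ 0) : fibPoly n ≠ 0 := fun h => by
  simpa [h, hn, eq_comm] using eval_one_fibPoly n

variable {A : Type*} [CommRing A] {x ω β : A}

theorem aeval_fibPoly_mul_sub (hsum : ω + β = x) (hprod : ω * β = -1) (n : ℕ) :
    aeval x (fibPoly n) * (ω - β) = ω ^ n - β ^ n := by
  induction n using Nat.twoStepInduction with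
  | zero => simp
  | one => simp
  | more n ih₀ ih₁ =>
    rw [fibPoly_add_two, map_add, map_mul, aeval_X, add_mul, mul_assoc, ih₀, ih₁, ← hsum]
    linear_combination (ω ^ n - β ^ n) * hprod

/-- Binet's formula for the Lucas polynomial `L_n = F_{n+1} + F_{n-1}`. -/
theorem aeval_fibPoly_succ_add_fibPoly_pred [IsDomain A] (hsum : ω + β = x)
    (hprod : ω * β = -1) (hne : ω ≠ β) {n : ℕ} (hn : n ≠ 0) :
    aeval x (fibPoly (n + 1) + fibPoly (n - 1)) = ω ^ n + β ^ n := by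
  obtain ⟨k, rfl⟩ : ∃ k, n = k + 1 := ⟨n - 1, by omega⟩
  refine mul_right_cancel₀ (sub_ne_zero.2 hne) ?_
  rw [map_add, add_mul, aeval_fibPoly_mul_sub hsum hprod, Nat.add_sub_cancel,
    aeval_fibPoly_mul_sub hsum hprod]
  linear_combination (ω ^ k - β ^ k) * hprod

end Fibonacci

section Fibotomic

variable {Ψ : ℕ → Polynomial ℤ}

theorem fibotomic_prime (hΨ1 : Ψ 1 = 1)
    (hΨprod : ∀ n, 1 ≤ n → fibPoly n = ∏ d ∈ n.divisors, Ψ d) {p : ℕ} (hp : p.Prime) :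
    Ψ p = fibPoly p := by
  rw [hΨprod p hp.one_le, hp.divisors, Finset.prod_pair hp.one_lt.ne, hΨ1, one_mul]

theorem X_mul_fibotomic_two_mul_prime (hΨ1 : Ψ 1 = 1)
    (hΨprod : ∀ n, 1 ≤ n → fibPoly n = ∏ d ∈ n.divisors, Ψ d) {p : ℕ} (hp : p.Prime)
    (hp2 : p ≠ 2) :
    X * Ψ (2 * p) = fibPoly (p + 1) + fibPoly (p - 1) := by
  have hΨ2 : Ψ 2 = X := by
    simpa [fibPoly_add_two] using fibotomic_prime hΨ1 hΨprod Nat.prime_two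
  have hcop : Nat.Coprime 2 p := (Nat.coprime_primes Nat.prime_two hp).2 hp2.symm
  have hprod := hΨprod (2 * p) (by linarith [hp.pos])
  rw [hcop.prod_divisors_mul, Nat.prime_two.divisors, hp.divisors,
    Finset.prod_pair (by norm_num : (1 : ℕ) ≠ 2), Finset.prod_pair hp.one_lt.ne,
    Finset.prod_pair hp.one_lt.ne, fibPoly_two_mul, ← fibotomic_prime hΨ1 hΨprod hp] at hprod
  simp only [one_mul, mul_one, hΨ1, hΨ2] at hprod
  refine mul_left_cancel₀ (fibotomic_prime hΨ1 hΨprod hp ▸ fibPoly_ne_zero hp.ne_zero) ?_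
  rw [← hprod]

end Fibotomic

theorem add_sqrt_sq_add_four_div_two_pos (x : ℝ) : 0 < (x + √(x ^ 2 + 4)) / 2 := by
  have : |x| < √(x ^ 2 + 4) := by
    rw [← Real.sqrt_sq_eq_abs]
    exact Real.sqrt_lt_sqrt (sq_nonneg x) (by linarith)
  linarith [neg_abs_le x]

theorem add_sqrt_sq_add_four_div_two_sub_inv (x : ℝ) :
    (x + √(x ^ 2 + 4)) / 2 - ((x + √(x ^ 2 + 4)) / 2)⁻¹ = x := by
  have hsq : √(x ^ 2 + 4) ^ 2 = x ^ 2 + 4 := Real.sq_sqrt (by positivity)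
  have hne : x + √(x ^ 2 + 4) ≠ 0 := by linarith [add_sqrt_sq_add_four_div_two_pos x]
  field_simp
  linear_combination hsq

theorem omega_pow_sub_inv_pow_general
    (Ψ : ℕ → Polynomial ℤ) (hΨ1 : Ψ 1 = 1)
    (hΨprod : ∀ n, 1 ≤ n → fibPoly n = ∏ d ∈ n.divisors, Ψ d)
    (p : ℕ) (hp : p.Prime) (hp2 : p ≠ 2) (x : ℝ)
    (ω : ℝ) (hω : ω = (x + Real.sqrt (x ^ 2 + 4)) / 2) :
    ω ^ (p : ℤ) - ω ^ (-(p : ℤ)) = x * (Polynomial.aeval x (Ψ (2 * p)) : ℝ) := by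
  have hpos : 0 < ω := hω ▸ add_sqrt_sq_add_four_div_two_pos x
  have hsum : ω + -ω⁻¹ = x := by rw [← sub_eq_add_neg, hω, add_sqrt_sq_add_four_div_two_sub_inv]
  have hprod : ω * -ω⁻¹ = -1 := by rw [mul_neg, mul_inv_cancel₀ hpos.ne']
  have hne : ω ≠ -ω⁻¹ := by linarith [inv_pos.2 hpos]
  have hlucas := aeval_fibPoly_succ_add_fibPoly_pred hsum hprod hne hp.ne_zero
  rw [← X_mul_fibotomic_two_mul_prime hΨ1 hΨprod hp hp2, map_mul, aeval_X] at hlucas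
  rw [hlucas, zpow_neg, zpow_natCast, neg_pow, (hp.odd_of_ne_two hp2).neg_one_pow, inv_pow]
  ring

theorem omega_pow_sub_inv_pow
    (Ψ : ℕ → Polynomial ℤ) (hΨ1 : Ψ 1 = 1)
    (hΨmonic : ∀ n, 1 ≤ n → (Ψ n).Monic)
    (hΨprod : ∀ n, 1 ≤ n → fibPoly n = ∏ d ∈ n.divisors, Ψ d)
    (p : ℕ) (hp : p.Prime) (hp2 : p ≠ 2) (x : ℝ) (hx : 0 < x)
    (ω : ℝ) (hω : ω = (x + Real.sqrt (x ^ 2 + 4)) / 2) :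
    ω ^ (p : ℤ) - ω ^ (-(p : ℤ)) = x * (Polynomial.aeval x (Ψ (2 * p)) : ℝ) :=
  omega_pow_sub_inv_pow_general Ψ hΨ1 hΨprod p hp hp2 x ω hω
end
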